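/- Let φ be a non-negative, nondecreasing function on (0, R₀] for some R₀ > 0. Suppose there exist non-negative constants A, B, α, β, ℓ with α > β such that φ(ρ) ≤ A(ρ/R)^α φ(R) + B R^β / (ln(R₀/R))^ℓ for all 0 < ρ ≤ R ≤ R₀. Then there exist γ₀ ∈ (β, α), τ ∈ (0,1), and c > 0, depending only on A, B, α, β, ℓ, such that φ(ρ) ≤ c (ρ/R)^{γ₀} (φ(R) + R^β / (ln(R₀/R))^ℓ) + c ρ^β / (ln(τ²R₀/ρ))^ℓ for all 0 < ρ ≤ R ≤ τ²R₀. -/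

import Mathlib

/-!
Choose `β < γ < α` and a ratio `τ` so small that `A τ^α ≤ τ^γ` and `2^(ℓ+1) τ^γ ≤ τ^β`.
Along the radii `τ^k R` the hypothesis reads
`φ(τ^(k+1) R) ≤ τ^γ φ(τ^k R) + B w(τ^k R)` with `w r = r^β / log(R₀/r)^ℓ`.
For `r ≤ τ R₀` the logarithm at most doubles when `r` is replaced by `τ r`, so
`w(τ r) ≥ 2^(-ℓ) τ^β w(r) ≥ 2 τ^γ w(r)`: the error terms grow geometrically faster than the
contraction, and the iteration sums to `φ(τ^(k+1) R) ≤ τ^((k+1)γ) φ(R) + 2 B w(τ^k R)`.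
Placing `ρ` between two consecutive radii and using monotonicity of `φ` and `w`, together with
`w(ρ/τ²) = τ^(-2β) ρ^β / log(τ² R₀/ρ)^ℓ`, gives the claim.
-/

open Real

noncomputable def logWeight (R₀ β ℓ r : ℝ) : ℝ := r ^ β / log (R₀ / r) ^ ℓ

section LogWeight

variable {R₀ β ℓ r s τ : ℝ}

lemma logWeight_nonneg (hr : 0 < r) (hrR : r ≤ R₀) : 0 ≤ logWeight R₀ β ℓ r := by
  have : 0 ≤ log (R₀ / r) := log_nonneg ((one_le_div hr).mpr hrR)
  unfold logWeight; positivity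

lemma logWeight_le_logWeight (hβ : 0 ≤ β) (hℓ : 0 ≤ ℓ) (hr : 0 < r) (hrs : r ≤ s)
    (hs : s < R₀) : logWeight R₀ β ℓ r ≤ logWeight R₀ β ℓ s := by
  have hs0 : 0 < s := hr.trans_le hrs
  have hlog : 0 < log (R₀ / s) := log_pos ((one_lt_div hs0).mpr hs)
  have hlog_le : log (R₀ / s) ≤ log (R₀ / r) :=
    log_le_log (div_pos (hs0.trans hs) hs0) (div_le_div_of_nonneg_left (by linarith) hr hrs)
  unfold logWeight
  gcongr

lemma logWeight_div (hr : 0 ≤ r) (hs : 0 ≤ s) :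
    logWeight R₀ β ℓ (r / s) = logWeight (s * R₀) β ℓ r / s ^ β := by
  unfold logWeight
  rw [div_rpow hr hs, div_div_eq_mul_div, mul_comm R₀ s, div_right_comm]

/-- `log (R₀ / (τ * r)) = log (R₀ / r) + log τ⁻¹ ≤ 2 * log (R₀ / r)` because `r ≤ τ * R₀`. -/
lemma rpow_mul_logWeight_le (hℓ : 0 ≤ ℓ) (hτ0 : 0 < τ) (hτ1 : τ < 1) (hr : 0 < r)
    (hrR : r ≤ τ * R₀) : τ ^ β * logWeight R₀ β ℓ r ≤ 2 ^ ℓ * logWeight R₀ β ℓ (τ * r) := by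
  set L := log (R₀ / r)
  have hτlog : 0 < -log τ := neg_pos.mpr (log_neg hτ0 hτ1)
  have hτL : -log τ ≤ L := by
    rw [← log_inv]
    exact log_le_log (inv_pos.mpr hτ0) (by rw [le_div_iff₀ hr]; field_simp; linarith)
  have hlog : log (R₀ / (τ * r)) = L + -log τ := by
    have hR₀ : 0 < R₀ := pos_of_mul_pos_right (hr.trans_le hrR) hτ0.le
    rw [div_mul_eq_div_div_swap, log_div (by positivity) hτ0.ne']
    ring
  have hpow : (L + -log τ) ^ ℓ ≤ 2 ^ ℓ * L ^ ℓ := by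
    rw [← mul_rpow (by norm_num) (by linarith)]
    exact rpow_le_rpow (by linarith) (by linarith) hℓ
  have hL : 0 < L ^ ℓ := rpow_pos_of_pos (by linarith) ℓ
  unfold logWeight
  rw [hlog, mul_rpow hτ0.le hr.le, ← mul_div_assoc, mul_div_assoc', div_le_div_iff₀ hL
    (rpow_pos_of_pos (by linarith) ℓ)]
  calc τ ^ β * r ^ β * (L + -log τ) ^ ℓ ≤ τ ^ β * r ^ β * (2 ^ ℓ * L ^ ℓ) := by gcongr
    _ = _ := by ring

end LogWeight

lemma le_pow_mul_add_of_le_mul_add {a b : ℕ → ℝ} {t B : ℝ} (ht : 0 ≤ t) (hB : 0 ≤ B)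
    (hb0 : 0 ≤ b 0) (hstep : ∀ k, a (k + 1) ≤ t * a k + B * b k)
    (hb : ∀ k, 2 * t * b k ≤ b (k + 1)) :
    ∀ k, a (k + 1) ≤ t ^ (k + 1) * a 0 + 2 * B * b k
  | 0 => by rw [zero_add, pow_one]; linarith [hstep 0, mul_nonneg hB hb0]
  | k + 1 => by
    have ih := le_pow_mul_add_of_le_mul_add ht hB hb0 hstep hb k
    calc a (k + 2) ≤ t * a (k + 1) + B * b (k + 1) := hstep (k + 1)
      _ ≤ t * (t ^ (k + 1) * a 0 + 2 * B * b k) + B * b (k + 1) := by gcongr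
      _ = t ^ (k + 2) * a 0 + B * (2 * t * b k) + B * b (k + 1) := by ring
      _ ≤ t ^ (k + 2) * a 0 + 2 * B * b (k + 1) := by nlinarith [hb k]

lemma exists_pos_lt_one_rpow_le {δ ε : ℝ} (hδ : 0 < δ) (hε : 0 < ε) :
    ∃ τ : ℝ, 0 < τ ∧ τ < 1 ∧ τ ^ δ ≤ ε := by
  have hm : 0 < min ε 2⁻¹ := lt_min hε (by norm_num)
  refine ⟨min ε 2⁻¹ ^ δ⁻¹, rpow_pos_of_pos hm _,
    rpow_lt_one hm.le ((min_le_right _ _).trans_lt (by norm_num)) (inv_pos.mpr hδ), ?_⟩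
  rw [rpow_inv_rpow hm.le hδ.ne']
  exact min_le_left _ _

lemma exists_exponent_radius {A α β ℓ : ℝ} (hA : 0 ≤ A) (hαβ : β < α) :
    ∃ γ τ : ℝ, β < γ ∧ γ < α ∧ 0 < τ ∧ τ < 1 ∧
      A * τ ^ α ≤ τ ^ γ ∧ 2 * 2 ^ ℓ * τ ^ γ ≤ τ ^ β := by
  obtain ⟨δ, hδ, rfl⟩ : ∃ δ, 0 < δ ∧ α = δ + (β + δ) := ⟨(α - β) / 2, by linarith, by ring⟩
  have hK : (0 : ℝ) < 2 * 2 ^ ℓ + A := by positivity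
  obtain ⟨τ, hτ0, hτ1, hτδ⟩ := exists_pos_lt_one_rpow_le hδ (inv_pos.mpr hK)
  have hsmall : τ ^ δ * (2 * 2 ^ ℓ + A) ≤ 1 := by
    simpa [inv_mul_cancel₀ hK.ne'] using mul_le_mul_of_nonneg_right hτδ hK.le
  have hτδ0 := rpow_nonneg hτ0.le δ
  have h2ℓ : (0 : ℝ) ≤ 2 * 2 ^ ℓ := by positivity
  refine ⟨β + δ, τ, by linarith, by linarith, hτ0, hτ1, ?_, ?_⟩
  · rw [rpow_add hτ0]
    nlinarith [rpow_nonneg hτ0.le (β + δ), mul_nonneg h2ℓ hτδ0]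
  · rw [rpow_add hτ0]
    nlinarith [rpow_nonneg hτ0.le β, mul_nonneg hA hτδ0]

section Iteration

variable {R₀ A B α β ℓ γ τ : ℝ} {φ : ℝ → ℝ}

lemma apply_mul_le_rpow_mul_add_logWeight (hφ0 : ∀ ρ, 0 < ρ → ρ ≤ R₀ → 0 ≤ φ ρ)
    (hineq : ∀ ρ R, 0 < ρ → ρ ≤ R → R ≤ R₀ →
      φ ρ ≤ A * (ρ / R) ^ α * φ R + B * R ^ β / (Real.log (R₀ / R)) ^ ℓ)
    (hτ0 : 0 < τ) (hτ1 : τ < 1) (hAτ : A * τ ^ α ≤ τ ^ γ) {r : ℝ} (hr : 0 < r) (hrR : r ≤ R₀) :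
    φ (τ * r) ≤ τ ^ γ * φ r + B * logWeight R₀ β ℓ r := by
  have h := hineq (τ * r) r (by positivity) (by nlinarith) hrR
  rw [mul_div_cancel_right₀ _ hr.ne', mul_div_assoc, ← logWeight] at h
  linarith [mul_le_mul_of_nonneg_right hAτ (hφ0 r hr hrR)]

lemma apply_pow_succ_mul_le (hφ0 : ∀ ρ, 0 < ρ → ρ ≤ R₀ → 0 ≤ φ ρ)
    (hineq : ∀ ρ R, 0 < ρ → ρ ≤ R → R ≤ R₀ →
      φ ρ ≤ A * (ρ / R) ^ α * φ R + B * R ^ β / (Real.log (R₀ / R)) ^ ℓ)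
    (hB : 0 ≤ B) (hℓ : 0 ≤ ℓ) (hτ0 : 0 < τ) (hτ1 : τ < 1) (hAτ : A * τ ^ α ≤ τ ^ γ)
    (hτβ : 2 * 2 ^ ℓ * τ ^ γ ≤ τ ^ β) {R : ℝ} (hR : 0 < R) (hRR₀ : R ≤ τ * R₀) (k : ℕ) :
    φ (τ ^ (k + 1) * R) ≤ (τ ^ γ) ^ (k + 1) * φ R + 2 * B * logWeight R₀ β ℓ (τ ^ k * R) := by
  have hτR₀ : τ * R₀ ≤ R₀ :=
    mul_le_of_le_one_left (pos_of_mul_pos_right (hR.trans_le hRR₀) hτ0.le).le hτ1.le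
  have hrad : ∀ k : ℕ, 0 < τ ^ k * R ∧ τ ^ k * R ≤ τ * R₀ := fun k =>
    ⟨by positivity, le_trans (mul_le_of_le_one_left hR.le (pow_le_one₀ hτ0.le hτ1.le)) hRR₀⟩
  have hpow : ∀ k : ℕ, τ ^ (k + 1) * R = τ * (τ ^ k * R) := fun k => by ring
  refine le_pow_mul_add_of_le_mul_add (a := fun k => φ (τ ^ k * R))
    (b := fun k => logWeight R₀ β ℓ (τ ^ k * R)) (rpow_nonneg hτ0.le γ) hB
    (by simpa using logWeight_nonneg hR (hRR₀.trans hτR₀)) (fun k => ?_) (fun k => ?_) k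
    |>.trans_eq (by simp)
  · simp only [hpow]
    exact apply_mul_le_rpow_mul_add_logWeight hφ0 hineq hτ0 hτ1 hAτ (hrad k).1
      ((hrad k).2.trans hτR₀)
  · have hlw := logWeight_nonneg (β := β) (ℓ := ℓ) (hrad k).1 ((hrad k).2.trans hτR₀)
    have h := (mul_le_mul_of_nonneg_right hτβ hlw).trans
      (rpow_mul_logWeight_le hℓ hτ0 hτ1 (hrad k).1 (hrad k).2)
    simp only [hpow]
    refine le_of_mul_le_mul_left ?_ (by positivity : (0 : ℝ) < 2 ^ ℓ)
    linarith

lemma apply_le_rpow_mul_add_logWeight (hφ0 : ∀ ρ, 0 < ρ → ρ ≤ R₀ → 0 ≤ φ ρ)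
    (hφmono : ∀ ρ₁ ρ₂, 0 < ρ₁ → ρ₁ ≤ ρ₂ → ρ₂ ≤ R₀ → φ ρ₁ ≤ φ ρ₂)
    (hineq : ∀ ρ R, 0 < ρ → ρ ≤ R → R ≤ R₀ →
      φ ρ ≤ A * (ρ / R) ^ α * φ R + B * R ^ β / (Real.log (R₀ / R)) ^ ℓ)
    (hB : 0 ≤ B) (hβ : 0 ≤ β) (hℓ : 0 ≤ ℓ) (hγ : 0 ≤ γ) (hτ0 : 0 < τ) (hτ1 : τ < 1)
    (hAτ : A * τ ^ α ≤ τ ^ γ) (hτβ : 2 * 2 ^ ℓ * τ ^ γ ≤ τ ^ β)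
    {ρ R : ℝ} (hρ : 0 < ρ) (hρR : ρ ≤ R) (hR : R ≤ τ ^ 2 * R₀) :
    φ ρ ≤ (τ ^ γ)⁻¹ * (ρ / R) ^ γ * φ R +
      2 * B / (τ ^ 2) ^ β * logWeight (τ ^ 2 * R₀) β ℓ ρ := by
  have hR0 : 0 < R := hρ.trans_le hρR
  have hRτ : R ≤ τ * R₀ := hR.trans (by nlinarith)
  have hRR₀ : R ≤ R₀ := hRτ.trans (by nlinarith)
  obtain ⟨n, hn1, hn⟩ := exists_nat_pow_near_of_lt_one (div_pos hρ hR0)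
    ((div_le_one hR0).mpr hρR) hτ0 hτ1
  have hρn : ρ ≤ τ ^ n * R := (div_le_iff₀ hR0).mp hn
  have hgeom : (τ ^ γ) ^ n ≤ (τ ^ γ)⁻¹ * (ρ / R) ^ γ := by
    rw [le_inv_mul_iff₀ (rpow_pos_of_pos hτ0 γ), ← pow_succ', rpow_pow_comm hτ0.le]
    exact rpow_le_rpow (by positivity) hn1.le hγ
  have hφρ : φ ρ ≤ φ (τ ^ n * R) := hφmono _ _ hρ hρn
    ((mul_le_of_le_one_left hR0.le (pow_le_one₀ hτ0.le hτ1.le)).trans hRR₀)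
  have hφR := hφ0 R hR0 hRR₀
  have hlw := logWeight_nonneg (β := β) (ℓ := ℓ) hρ (hρR.trans hR)
  cases n with
  | zero =>
    rw [pow_zero, one_mul] at hφρ
    have := le_mul_of_one_le_left hφR (by simpa using hgeom)
    have : 0 ≤ 2 * B / (τ ^ 2) ^ β * logWeight (τ ^ 2 * R₀) β ℓ ρ := by positivity
    linarith
  | succ k =>
    have hlwk : logWeight R₀ β ℓ (τ ^ k * R) ≤ logWeight (τ ^ 2 * R₀) β ℓ ρ / (τ ^ 2) ^ β := by
      rw [← logWeight_div hρ.le (by positivity)]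
      apply logWeight_le_logWeight hβ hℓ (by positivity)
      · rw [le_div_iff₀ (by positivity)]
        rw [lt_div_iff₀ hR0] at hn1
        linarith [show τ ^ (k + 1 + 1) * R = τ ^ k * R * τ ^ 2 by ring]
      · rw [div_lt_iff₀ (by positivity)]
        have : τ ^ (k + 1) * R ≤ τ * R := by
          gcongr
          exact pow_le_of_le_one hτ0.le hτ1.le (by omega)
        nlinarith
    calc φ ρ ≤ φ (τ ^ (k + 1) * R) := hφρ
      _ ≤ (τ ^ γ) ^ (k + 1) * φ R + 2 * B * logWeight R₀ β ℓ (τ ^ k * R) :=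
        apply_pow_succ_mul_le hφ0 hineq hB hℓ hτ0 hτ1 hAτ hτβ hR0 hRτ k
      _ ≤ (τ ^ γ)⁻¹ * (ρ / R) ^ γ * φ R +
          2 * B * (logWeight (τ ^ 2 * R₀) β ℓ ρ / (τ ^ 2) ^ β) := by gcongr
      _ = _ := by ring

end Iteration

theorem stmt0_general (R₀ A B α β ℓ : ℝ) (hA : 0 ≤ A) (hB : 0 ≤ B)
    (hβ : 0 ≤ β) (hℓ : 0 ≤ ℓ) (hαβ : β < α)
    (φ : ℝ → ℝ) (hφ0 : ∀ ρ, 0 < ρ → ρ ≤ R₀ → 0 ≤ φ ρ)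
    (hφmono : ∀ ρ₁ ρ₂, 0 < ρ₁ → ρ₁ ≤ ρ₂ → ρ₂ ≤ R₀ → φ ρ₁ ≤ φ ρ₂)
    (hineq : ∀ ρ R, 0 < ρ → ρ ≤ R → R ≤ R₀ →
      φ ρ ≤ A * (ρ / R) ^ α * φ R + B * R ^ β / (Real.log (R₀ / R)) ^ ℓ) :
    ∃ γ₀ τ c : ℝ, β < γ₀ ∧ γ₀ < α ∧ 0 < τ ∧ τ < 1 ∧ 0 < c ∧
      ∀ ρ R, 0 < ρ → ρ ≤ R → R ≤ τ ^ 2 * R₀ →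
        φ ρ ≤ c * (ρ / R) ^ γ₀ * (φ R + R ^ β / (Real.log (R₀ / R)) ^ ℓ) +
          c * ρ ^ β / (Real.log (τ ^ 2 * R₀ / ρ)) ^ ℓ := by
  obtain ⟨γ, τ, hβγ, hγα, hτ0, hτ1, hAτ, hτβ⟩ := exists_exponent_radius (ℓ := ℓ) hA hαβ
  set c := (τ ^ γ)⁻¹ + 2 * B / (τ ^ 2) ^ β
  refine ⟨γ, τ, c, hβγ, hγα, hτ0, hτ1, by positivity, fun ρ R hρ hρR hR => ?_⟩
  have hR0 : 0 < R := hρ.trans_le hρR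
  have hRR₀ : R ≤ R₀ := hR.trans (mul_le_of_le_one_left (pos_of_mul_pos_right
    (hR0.trans_le hR) (by positivity)).le (pow_le_one₀ hτ0.le hτ1.le))
  calc φ ρ ≤ (τ ^ γ)⁻¹ * (ρ / R) ^ γ * φ R +
        2 * B / (τ ^ 2) ^ β * logWeight (τ ^ 2 * R₀) β ℓ ρ :=
      apply_le_rpow_mul_add_logWeight hφ0 hφmono hineq hB hβ hℓ (hβ.trans hβγ.le) hτ0 hτ1
        hAτ hτβ hρ hρR hR
    _ ≤ c * (ρ / R) ^ γ * (φ R + logWeight R₀ β ℓ R) + c * logWeight (τ ^ 2 * R₀) β ℓ ρ := by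
      have hφR := hφ0 R hR0 hRR₀
      have hlwR := logWeight_nonneg (β := β) (ℓ := ℓ) hR0 hRR₀
      have hlwρ := logWeight_nonneg (β := β) (ℓ := ℓ) hρ (hρR.trans hR)
      gcongr ?_ * _ * ?_ + ?_ * _
      · exact le_add_of_nonneg_right (by positivity)
      · exact le_add_of_nonneg_right hlwR
      · exact le_add_of_nonneg_left (by positivity)
    _ = _ := by rw [mul_div_assoc]; rfl

/-- Refined Campanato–Morrey iteration lemma with logarithmic correction. -/
theorem stmt0 (R₀ A B α β ℓ : ℝ) (hR₀ : 0 < R₀) (hA : 0 ≤ A) (hB : 0 ≤ B)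
    (hβ : 0 ≤ β) (hℓ : 0 ≤ ℓ) (hαβ : β < α)
    (φ : ℝ → ℝ) (hφ0 : ∀ ρ, 0 < ρ → ρ ≤ R₀ → 0 ≤ φ ρ)
    (hφmono : ∀ ρ₁ ρ₂, 0 < ρ₁ → ρ₁ ≤ ρ₂ → ρ₂ ≤ R₀ → φ ρ₁ ≤ φ ρ₂)
    (hineq : ∀ ρ R, 0 < ρ → ρ ≤ R → R ≤ R₀ →
      φ ρ ≤ A * (ρ / R) ^ α * φ R + B * R ^ β / (Real.log (R₀ / R)) ^ ℓ) :
    ∃ γ₀ τ c : ℝ, β < γ₀ ∧ γ₀ < α ∧ 0 < τ ∧ τ < 1 ∧ 0 < c ∧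
      ∀ ρ R, 0 < ρ → ρ ≤ R → R ≤ τ ^ 2 * R₀ →
        φ ρ ≤ c * (ρ / R) ^ γ₀ * (φ R + R ^ β / (Real.log (R₀ / R)) ^ ℓ) +
          c * ρ ^ β / (Real.log (τ ^ 2 * R₀ / ρ)) ^ ℓ :=
  stmt0_general R₀ A B α β ℓ hA hB hβ hℓ hαβ φ hφ0 hφmono hineq
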